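/- (Shape compatibility test.) Let ε ≥ 0, let c ∈ ℝ^K satisfy c ≥ 0 componentwise and 1_Kᵀ c = 1, let R ∈ SO(3) and p ∈ ℝ³, and suppose two inlier keypoint measurements satisfy y^i = R(B_i c) + p + ε^i and y^j = R(B_j c) + p + ε^j with ‖ε^i‖ ≤ ε and ‖ε^j‖ ≤ ε. Then b_{ij}^{min} − 2ε ≤ ‖y^i − y^j‖ ≤ b_{ij}^{max} + 2ε, where b_{ij}^{min} and b_{ij}^{max} are respectively the minimum and the maximum of ‖(B_i − B_j)c'‖ over all c' ∈ ℝ^K with c' ≥ 0 and 1_Kᵀ c' = 1. -/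
import Mathlib


open Matrix

/-- SO(3): real 3×3 matrices with `RᵀR = I` and `det R = 1`. -/
def SO3 : Set (Matrix (Fin 3) (Fin 3) ℝ) := {R | Rᵀ * R = 1 ∧ R.det = 1}

/-- Euclidean norm of a vector in `ℝ³`. -/
noncomputable def enorm3 (v : Fin 3 → ℝ) : ℝ := ‖(WithLp.equiv 2 (Fin 3 → ℝ)).symm v‖

lemma enorm3_nonneg (v : Fin 3 → ℝ) : 0 ≤ enorm3 v := norm_nonneg _

lemma enorm3_add_le (a b : Fin 3 → ℝ) : enorm3 (a + b) ≤ enorm3 a + enorm3 b :=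
  norm_add_le ((WithLp.equiv 2 (Fin 3 → ℝ)).symm a) ((WithLp.equiv 2 (Fin 3 → ℝ)).symm b)

lemma enorm3_sub_le (a b : Fin 3 → ℝ) : enorm3 (a - b) ≤ enorm3 a + enorm3 b :=
  norm_sub_le ((WithLp.equiv 2 (Fin 3 → ℝ)).symm a) ((WithLp.equiv 2 (Fin 3 → ℝ)).symm b)

lemma enorm3_sq (v : Fin 3 → ℝ) : enorm3 v ^ 2 = v ⬝ᵥ v := by
  have h : enorm3 v = Real.sqrt (∑ i, v i ^ 2) := by
    rw [enorm3, EuclideanSpace.norm_eq]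
    simp [sq_abs]
  rw [h, Real.sq_sqrt (by positivity)]
  simp [dotProduct, sq]

lemma enorm3_mulVec_SO3 (R : Matrix (Fin 3) (Fin 3) ℝ) (hR : R ∈ SO3)
    (v : Fin 3 → ℝ) : enorm3 (R.mulVec v) = enorm3 v := by
  have hsq : enorm3 (R.mulVec v) ^ 2 = enorm3 v ^ 2 := by
    rw [enorm3_sq, enorm3_sq, Matrix.dotProduct_mulVec, ← Matrix.mulVec_transpose,
      Matrix.mulVec_mulVec, hR.1, Matrix.one_mulVec]
  rw [← Real.sqrt_sq (enorm3_nonneg (R.mulVec v)), ← Real.sqrt_sq (enorm3_nonneg v), hsq]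

/-- Shape compatibility test: if two inlier measurements
`y^i = R(B_i c) + p + ε^i`, `y^j = R(B_j c) + p + ε^j` with noises bounded by `ε`
and `c` in the probability simplex, then
`b_{ij}^{min} − 2ε ≤ ‖y^i − y^j‖ ≤ b_{ij}^{max} + 2ε`, where `b_{ij}^{min}` /
`b_{ij}^{max}` are the min/max of `‖(B_i − B_j)c'‖` over the simplex. -/
theorem stmt_9 (K : ℕ) (eps : ℝ) (heps : 0 ≤ eps)
    (c : Fin K → ℝ) (hc0 : ∀ k, 0 ≤ c k) (hc1 : ∑ k, c k = 1)
    (R : Matrix (Fin 3) (Fin 3) ℝ) (hR : R ∈ SO3) (p : Fin 3 → ℝ)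
    (Bi Bj : Matrix (Fin 3) (Fin K) ℝ)
    (yi yj εi εj : Fin 3 → ℝ)
    (hyi : yi = R.mulVec (Bi.mulVec c) + p + εi)
    (hyj : yj = R.mulVec (Bj.mulVec c) + p + εj)
    (hεi : enorm3 εi ≤ eps) (hεj : enorm3 εj ≤ eps)
    (bmin bmax : ℝ)
    (hbmin : IsLeast {r | ∃ c' : Fin K → ℝ, (∀ k, 0 ≤ c' k) ∧ ∑ k, c' k = 1 ∧
      r = enorm3 ((Bi - Bj).mulVec c')} bmin)
    (hbmax : IsGreatest {r | ∃ c' : Fin K → ℝ, (∀ k, 0 ≤ c' k) ∧ ∑ k, c' k = 1 ∧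
      r = enorm3 ((Bi - Bj).mulVec c')} bmax) :
    bmin - 2 * eps ≤ enorm3 (yi - yj) ∧ enorm3 (yi - yj) ≤ bmax + 2 * eps := by
  set d : Fin 3 → ℝ := (Bi - Bj).mulVec c with hd
  have hdecomp : yi - yj = R.mulVec d + (εi - εj) := by
    rw [hyi, hyj, hd, Matrix.sub_mulVec, Matrix.mulVec_sub]
    ext x
    simp [Pi.sub_apply]
    ring
  have hmem : enorm3 d ∈ {r | ∃ c' : Fin K → ℝ, (∀ k, 0 ≤ c' k) ∧ ∑ k, c' k = 1 ∧
      r = enorm3 ((Bi - Bj).mulVec c')} := ⟨c, hc0, hc1, rfl⟩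
  have hRd : enorm3 (R.mulVec d) = enorm3 d := enorm3_mulVec_SO3 R hR d
  have hnoise : enorm3 (εi - εj) ≤ 2 * eps := by
    calc enorm3 (εi - εj) ≤ enorm3 εi + enorm3 εj := enorm3_sub_le _ _
    _ ≤ 2 * eps := by linarith
  constructor
  · have h1 : enorm3 (R.mulVec d) ≤ enorm3 (yi - yj) + enorm3 (εi - εj) := by
      have : R.mulVec d = (yi - yj) - (εi - εj) := by rw [hdecomp]; abel
      rw [this]
      exact enorm3_sub_le _ _
    have h2 : bmin ≤ enorm3 d := hbmin.2 hmem
    linarith [hRd ▸ h1]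
  · have h1 : enorm3 (yi - yj) ≤ enorm3 (R.mulVec d) + enorm3 (εi - εj) := by
      rw [hdecomp]; exact enorm3_add_le _ _
    have h2 : enorm3 d ≤ bmax := hbmax.2 hmem
    linarith [hRd ▸ h1]
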